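/- arXiv:1310.0607 — 2 statements merged into one kernel-verified Lean document; each statement's English description precedes it below -/
import Mathlib

section
/- Consider the 3×3 matrix Λ(ε,κ) = [[−2+ε, ε, 8+ε], [1+ε, 3+ε−κ, 1+ε], [ε, 4+ε, −1+ε]]. For ε = 0.001 and κ = 33, the matrix Λ is Hurwitz, i.e., all its eigenvalues have strictly negative real part. -/
/-!
The matrix is Metzler (its off-diagonal entries are nonnegative) and `Λ *ᵥ d < 0` for the positive
vector `d = (33/2, 1, 41/10)`. Scaling the columns by `d` makes `μ - Λ` strictly diagonally
dominant whenever `Re μ ≥ 0`, so by the Levy–Desplanques theorem `μ - Λ` is invertible and `μ` is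
not an eigenvalue.
-/

open Matrix

namespace Matrix

variable {n : Type*} [Fintype n] [DecidableEq n]

theorem det_ne_zero_of_weighted_sum_row_lt_diag {𝕜 : Type*} [RCLike 𝕜] {A : Matrix n n 𝕜}
    {d : n → ℝ} (hd : ∀ i, 0 < d i)
    (h : ∀ i, ∑ j ∈ Finset.univ.erase i, ‖A i j‖ * d j < ‖A i i‖ * d i) :
    A.det ≠ 0 := by
  have hnorm : ∀ i j, ‖(A * diagonal fun k ↦ (d k : 𝕜)) i j‖ = ‖A i j‖ * d j := fun i j ↦ by
    rw [mul_diagonal, norm_mul, RCLike.norm_ofReal, abs_of_pos (hd j)]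
  have hscaled := det_ne_zero_of_sum_row_lt_diag (A := A * diagonal fun k ↦ (d k : 𝕜))
    fun i ↦ by simpa only [hnorm] using h i
  rw [det_mul] at hscaled
  exact left_ne_zero_of_mul hscaled

theorem re_lt_zero_of_mem_spectrum_of_weighted_row_dominant {A : Matrix n n ℂ} {d : n → ℝ}
    (hd : ∀ i, 0 < d i)
    (h : ∀ i, (A i i).re * d i + ∑ j ∈ Finset.univ.erase i, ‖A i j‖ * d j < 0)
    {μ : ℂ} (hμ : μ ∈ spectrum ℂ A) : μ.re < 0 := by
  by_contra! hre
  set N := algebraMap ℂ (Matrix n n ℂ) μ - A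
  have hdet : N.det ≠ 0 := by
    refine det_ne_zero_of_weighted_sum_row_lt_diag hd fun i ↦ ?_
    have hoff : ∑ j ∈ Finset.univ.erase i, ‖N i j‖ * d j
        = ∑ j ∈ Finset.univ.erase i, ‖A i j‖ * d j := Finset.sum_congr rfl fun j hj ↦ by
      simp [N, algebraMap_matrix_apply, (Finset.ne_of_mem_erase hj).symm]
    have hdiag : -(A i i).re ≤ ‖N i i‖ :=
      calc -(A i i).re ≤ (μ - A i i).re := by rw [Complex.sub_re]; linarith
        _ ≤ ‖N i i‖ := by
          simpa only [N, sub_apply, algebraMap_matrix_apply, if_true, Algebra.algebraMap_self,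
            RingHom.id_apply] using Complex.re_le_norm _
    rw [hoff]
    linarith [h i, mul_le_mul_of_nonneg_right hdiag (hd i).le]
  exact hμ ((isUnit_iff_isUnit_det N).mpr (isUnit_iff_ne_zero.mpr hdet))

theorem re_lt_zero_of_mem_spectrum_of_metzler {A : Matrix n n ℝ}
    (hA : ∀ i j, i ≠ j → 0 ≤ A i j) {d : n → ℝ} (hd : ∀ i, 0 < d i) (hAd : ∀ i, (A *ᵥ d) i < 0)
    {μ : ℂ} (hμ : μ ∈ spectrum ℂ (A.map ((↑) : ℝ → ℂ))) : μ.re < 0 := by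
  refine re_lt_zero_of_mem_spectrum_of_weighted_row_dominant hd (fun i ↦ ?_) hμ
  have hoff : ∀ j ∈ Finset.univ.erase i, ‖(A.map ((↑) : ℝ → ℂ)) i j‖ * d j = A i j * d j :=
    fun j hj ↦ by
      rw [map_apply, Complex.norm_real,
        Real.norm_of_nonneg (hA i j (Finset.ne_of_mem_erase hj).symm)]
  rw [Finset.sum_congr rfl hoff, map_apply, Complex.ofReal_re]
  have := hAd i
  rwa [mulVec, dotProduct, ← Finset.add_sum_erase _ _ (Finset.mem_univ i)] at this

end Matrix

theorem stmt_14 :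
    let ε : ℝ := 0.001
    let κ : ℝ := 33
    let Λ : Matrix (Fin 3) (Fin 3) ℝ :=
      !![-2 + ε, ε, 8 + ε; 1 + ε, 3 + ε - κ, 1 + ε; ε, 4 + ε, -1 + ε]
    ∀ μ : ℂ, μ ∈ spectrum ℂ (Λ.map ((↑·) : ℝ → ℂ)) → μ.re < 0 := by
  intro ε κ Λ μ hμ
  refine re_lt_zero_of_mem_spectrum_of_metzler (d := ![33 / 2, 1, 41 / 10]) ?_ ?_ ?_ hμ
  · intro i j hij
    fin_cases i <;> fin_cases j <;> simp_all [Λ, ε] <;> norm_num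
  · intro i
    fin_cases i <;> norm_num
  · intro i
    fin_cases i <;> simp [Λ, ε, κ, mulVec, dotProduct, Fin.sum_univ_three] <;> norm_num
end

section
/- Along solutions of the system ẋ₁ = w₁(x₂ − x₁), ẋ₃ = x₁x₂ − w₂x₃ with w₁, w₂ > 0, the function V₁ = ½x₁² + ¼x₁⁴ + ½x₃², restricted to a bounded set, satisfies V̇₁ ≤ −c₁V₁ + c₂(x₂² + x₂⁴) for some constants c₁, c₂ > 0. -/
theorem stmt_16 (w₁ w₂ : ℝ) (hw₁ : 0 < w₁) (hw₂ : 0 < w₂) (R : ℝ) (hR : 0 < R) :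
    ∃ c₁ > (0:ℝ), ∃ c₂ > (0:ℝ), ∀ x₁ x₂ x₃ : ℝ,
      |x₁| ≤ R → |x₂| ≤ R → |x₃| ≤ R →
        (x₁ + x₁ ^ 3) * (w₁ * (x₂ - x₁)) + x₃ * (x₁ * x₂ - w₂ * x₃) ≤
          -c₁ * (x₁ ^ 2 / 2 + x₁ ^ 4 / 4 + x₃ ^ 2 / 2) + c₂ * (x₂ ^ 2 + x₂ ^ 4) := by
  refine ⟨min w₁ w₂, lt_min hw₁ hw₂, 7*w₁ + R^2/w₂ + 1, by positivity, ?_⟩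
  intro x₁ x₂ x₃ h1 h2 h3
  obtain ⟨h1a, h1b⟩ := abs_le.mp h1
  have hx1 : x₁^2 ≤ R^2 := sq_le_sq' h1a h1b
  have key : x₁*x₂*x₃*(2*w₂) ≤ w₂^2*x₃^2 + R^2*x₂^2 := by
    nlinarith [sq_nonneg (w₂*x₃ - x₁*x₂), mul_le_mul_of_nonneg_right hx1 (sq_nonneg x₂)]
  have key2 : x₁*x₂*x₃ ≤ w₂/2*x₃^2 + R^2/(2*w₂)*x₂^2 := by
    rw [show w₂/2*x₃^2 + R^2/(2*w₂)*x₂^2 = (w₂^2*x₃^2 + R^2*x₂^2)/(2*w₂) by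
      field_simp]
    rw [le_div_iff₀ (by positivity)]
    linarith [key]
  have hcube : x₁^3*x₂ ≤ x₁^4/4 + 7*x₂^4 := by
    nlinarith [sq_nonneg (x₁^2 - 3*x₁*x₂), sq_nonneg (x₁*x₂ - 3*x₂^2),
      sq_nonneg (x₁^2 - 3*x₂^2), sq_nonneg (x₁^2 + 3*x₂^2 - 2*x₁*x₂), sq_nonneg x₂]
  have hlin : x₁*x₂ ≤ x₁^2/4 + x₂^2 := by nlinarith [sq_nonneg (x₁ - 2*x₂)]
  have hm1 : min w₁ w₂ ≤ w₁ := min_le_left _ _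
  have hm2 : min w₁ w₂ ≤ w₂ := min_le_right _ _
  have hRw : 0 ≤ R^2/(2*w₂) := by positivity
  have hR2 : R^2/(2*w₂) ≤ R^2/w₂ := by
    apply div_le_div_of_nonneg_left (by positivity) hw₂ (by linarith)
  nlinarith [mul_le_mul_of_nonneg_left hcube hw₁.le,
    mul_le_mul_of_nonneg_left hlin hw₁.le, key2, sq_nonneg x₂, sq_nonneg (x₂^2),
    mul_le_mul_of_nonneg_right hR2 (sq_nonneg x₂), sq_nonneg x₁, sq_nonneg x₃,
    sq_nonneg (x₁^2), mul_nonneg hw₁.le (sq_nonneg x₁), mul_nonneg hw₁.le (sq_nonneg (x₁^2))]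
end
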